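/- arXiv:1110.2203 — 2 statements merged into one kernel-verified Lean document; each statement's English description precedes it below -/
import Mathlib

section
/- Let T be a tree with vertex set U, let r ∈ U be a fixed root, and let A and B be subsets of U that are tree convex under T. Let a ∈ A be a vertex of A at minimal graph distance from r (a root of A) and let b ∈ B be a vertex of B at minimal graph distance from r (a root of B). Then A ∩ B is nonempty if and only if a ∈ A ∩ B or b ∈ A ∩ B. -/
/-- A set `A` of vertices of a tree `T` is *tree convex* under `T` if it is the vertex
set of a subtree of `T`, i.e. the subgraph of `T` induced on `A` is connected
(connectedness includes nonemptiness). -/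
def TreeConvexSet {U : Type} (T : SimpleGraph U) (A : Set U) : Prop :=
  (T.induce A).Connected

/-!
Let `c ∈ A ∩ B` and let `p` be the path from `r` to `c`. The root of a tree convex set `A`
lies on the path from `r` to any vertex of `A`, so both `a` and `b` lie on `p`; say
`dist r a ≤ dist r b`. Being no closer to `r`, `b` cannot lie strictly before `a` on `p`, so it
lies on the segment of `p` from `a` to `c`: the unique path between two vertices of `A`, which
therefore lies in `A`.
-/

namespace SimpleGraph

variable {V : Type*} {G : SimpleGraph V}

lemma IsAcyclic.length_eq_dist_of_isPath (hG : G.IsAcyclic) {u v : V} {p : G.Walk u v}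
    (hp : p.IsPath) : p.length = G.dist u v := by
  obtain ⟨q, hq, hlen⟩ := p.reachable.exists_path_of_dist
  rw [← hlen, Subtype.mk.inj ((hG.subsingleton_path u v).elim ⟨p, hp⟩ ⟨q, hq⟩)]

lemma IsAcyclic.dist_add_dist_of_mem_support (hG : G.IsAcyclic) {u v w : V} {p : G.Walk u w}
    (hp : p.IsPath) (hv : v ∈ p.support) : G.dist u v + G.dist v w = G.dist u w := by
  classical
  rw [← hG.length_eq_dist_of_isPath (hp.takeUntil hv), ← hG.length_eq_dist_of_isPath
    (hp.dropUntil hv), ← hG.length_eq_dist_of_isPath hp, ← Walk.length_append, p.take_spec hv]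

lemma IsAcyclic.eq_of_mem_support_of_dist_le (hG : G.IsAcyclic) {u v w : V} {p : G.Walk u v}
    (hp : p.IsPath) (hw : w ∈ p.support) (hdist : G.dist u v ≤ G.dist u w) : w = v := by
  classical
  have hsum := hG.dist_add_dist_of_mem_support hp hw
  exact (p.dropUntil w hw).reachable.dist_eq_zero_iff.mp (by omega)

/-- Moving from `u` to a neighbour `x` extends or shortens the path from `r` by one edge, so
a vertex on the path to `u` stays on the path to `x` unless it is `u` itself. -/
lemma IsAcyclic.mem_support_of_adj_of_dist_le (hG : G.IsAcyclic) {r u x a : V}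
    {p : G.Walk r u} {q : G.Walk r x} (hp : p.IsPath) (hq : q.IsPath) (hadj : G.Adj u x)
    (ha : a ∈ p.support) (hdist : G.dist r a ≤ G.dist r x) : a ∈ q.support := by
  by_cases hx : x ∈ p.support
  · have hau : a ≠ u := by
      rintro rfl
      exact hadj.ne (hG.eq_of_mem_support_of_dist_le hp hx hdist).symm
    rw [hG.path_concat hq hp hadj.symm hx, Walk.support_concat] at ha
    simpa [hau] using ha
  · have hu : u ∈ q.support := hG.mem_support_of_ne_mem_support_of_adj_of_isPath hq hp hadj.symm hx
    rw [hG.path_concat hp hq hadj hu, Walk.support_concat]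
    exact List.mem_append_left _ ha

end SimpleGraph

namespace TreeConvexSet

open SimpleGraph

variable {U : Type} {T : SimpleGraph U} {A : Set U}

lemma support_subset (hT : T.IsAcyclic) (hA : TreeConvexSet T A) {x y : U} (hx : x ∈ A)
    (hy : y ∈ A) {p : T.Walk x y} (hp : p.IsPath) : ∀ v ∈ p.support, v ∈ A := by
  obtain ⟨q, hq, -⟩ := (hA.preconnected ⟨x, hx⟩ ⟨y, hy⟩).exists_path_of_dist
  have hmap : (q.map (Embedding.induce A).toHom).IsPath := hq.map Subtype.val_injective
  have hpq : p.support = (q.map (Embedding.induce A).toHom).support :=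
    congrArg (Walk.support ∘ Subtype.val) ((hT.subsingleton_path x y).elim ⟨p, hp⟩ ⟨_, hmap⟩)
  intro v hv
  obtain ⟨w, -, rfl⟩ := List.mem_map.mp (q.support_map (Embedding.induce A).toHom ▸ hpq ▸ hv)
  exact w.2

lemma mem_support_of_isMinOn_dist (hT : T.IsTree) (hA : TreeConvexSet T A) {r a c : U}
    (haA : a ∈ A) (ha : IsMinOn (T.dist r) A a) (hc : c ∈ A) {p : T.Walk r c} (hp : p.IsPath) :
    a ∈ p.support := by
  suffices h : ∀ c : A, Relation.ReflTransGen (T.induce A).Adj ⟨a, haA⟩ c →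
      ∀ p : T.Walk r c, p.IsPath → a ∈ p.support from
    h ⟨c, hc⟩ ((reachable_iff_reflTransGen _ _).mp (hA.preconnected _ _)) p hp
  intro c hac
  induction hac with
  | refl => exact fun p _ ↦ p.end_mem_support
  | tail _ hadj ih =>
    intro p hp
    obtain ⟨q, hq, -⟩ := hT.connected.exists_path_of_dist r _
    exact hT.isAcyclic.mem_support_of_adj_of_dist_le hq hp hadj (ih q hq)
      (isMinOn_iff.mp ha _ (Subtype.prop _))

lemma mem_of_isMinOn_dist_of_mem_inter {B : Set U} (hT : T.IsTree) (hA : TreeConvexSet T A)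
    (hB : TreeConvexSet T B) {r a b c : U} (haA : a ∈ A) (ha : IsMinOn (T.dist r) A a)
    (hbB : b ∈ B) (hb : IsMinOn (T.dist r) B b) (hab : T.dist r a ≤ T.dist r b)
    (hc : c ∈ A ∩ B) : b ∈ A := by
  classical
  obtain ⟨p, hp, -⟩ := hT.connected.exists_path_of_dist r c
  have hap := hA.mem_support_of_isMinOn_dist hT haA ha hc.1 hp
  have hbp := hB.mem_support_of_isMinOn_dist hT hbB hb hc.2 hp
  rw [← p.take_spec hap, Walk.mem_support_append_iff] at hbp
  rcases hbp with hb_before | hb_after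
  · rw [hT.isAcyclic.eq_of_mem_support_of_dist_le (hp.takeUntil hap) hb_before hab]
    exact haA
  · exact hA.support_subset hT.isAcyclic haA hc.1 (hp.dropUntil hap) b hb_after

end TreeConvexSet

theorem tree_convex_inter_nonempty_iff_root_mem_general {U : Type}
    (T : SimpleGraph U) (hT : T.IsTree) (r : U) (A B : Set U)
    (hA : TreeConvexSet T A) (hB : TreeConvexSet T B)
    (a : U) (haA : a ∈ A) (haMin : ∀ a' ∈ A, T.dist r a ≤ T.dist r a')
    (b : U) (hbB : b ∈ B) (hbMin : ∀ b' ∈ B, T.dist r b ≤ T.dist r b') :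
    (A ∩ B).Nonempty ↔ a ∈ A ∩ B ∨ b ∈ A ∩ B := by
  have ha : IsMinOn (T.dist r) A a := isMinOn_iff.mpr haMin
  have hb : IsMinOn (T.dist r) B b := isMinOn_iff.mpr hbMin
  refine ⟨fun ⟨c, hc⟩ ↦ ?_, fun h ↦ h.elim (⟨a, ·⟩) (⟨b, ·⟩)⟩
  rcases le_total (T.dist r a) (T.dist r b) with hab | hba
  · exact Or.inr ⟨hA.mem_of_isMinOn_dist_of_mem_inter hT hB haA ha hbB hb hab hc, hbB⟩
  · exact Or.inl ⟨haA, hB.mem_of_isMinOn_dist_of_mem_inter hT hA hbB hb haA ha hba hc.symm⟩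

/-- Given a tree `T` rooted at `r` and tree convex sets `A`, `B` with respective
roots `a` and `b` (elements of minimal graph distance from `r`), the intersection
`A ∩ B` is nonempty iff `a ∈ A ∩ B` or `b ∈ A ∩ B`. -/
theorem tree_convex_inter_nonempty_iff_root_mem {U : Type} [Fintype U]
    (T : SimpleGraph U) (hT : T.IsTree) (r : U) (A B : Set U)
    (hA : TreeConvexSet T A) (hB : TreeConvexSet T B)
    (a : U) (haA : a ∈ A) (haMin : ∀ a' ∈ A, T.dist r a ≤ T.dist r a')
    (b : U) (hbB : b ∈ B) (hbMin : ∀ b' ∈ B, T.dist r b ≤ T.dist r b') :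
    (A ∩ B).Nonempty ↔ a ∈ A ∩ B ∨ b ∈ A ∩ B :=
  tree_convex_inter_nonempty_iff_root_mem_general T hT r A B hA hB a haA haMin b hbB hbMin
end

section
/- Let R be a constraint network in which every constraint has arity at most r. If R is strongly ((m+1)(r−1)+1)-consistent and weakly m-tight at level (m+1)(r−1)+1, then R is globally consistent. -/
/-- A constraint: a nonempty scope of variables and a set of allowed tuples
(total assignments whose restriction to the scope determines membership). -/
structure Constraint (V : Type) (α : Type) where
  scope : Finset V
  scope_nonempty : scope.Nonempty
  allowed : Set (V → α)
  allowed_ext : ∀ f g : V → α, (∀ v ∈ scope, f v = g v) → f ∈ allowed → g ∈ allowed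

/-- A constraint network: a finite nonempty domain for each variable and a finite
set of constraints, no two of which have the same scope. -/
structure Network (V : Type) (α : Type) [Fintype V] [DecidableEq V] where
  dom : V → Finset α
  dom_nonempty : ∀ v, (dom v).Nonempty
  cons : Set (Constraint V α)
  cons_finite : cons.Finite
  scope_inj : ∀ c ∈ cons, ∀ c' ∈ cons, c.scope = c'.scope → c = c'

namespace Network

variable {V α : Type} [Fintype V] [DecidableEq V]

/-- `f` is an instantiation of the variables `Y`: each variable of `Y` gets a value
from its domain. -/
def Inst (R : Network V α) (Y : Set V) (f : V → α) : Prop :=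
  ∀ v ∈ Y, f v ∈ R.dom v

/-- `f` is a consistent instantiation of the variables `Y`: it is an instantiation of
`Y` satisfying every constraint whose scope is contained in `Y`. -/
def ConsistentOn (R : Network V α) (Y : Set V) (f : V → α) : Prop :=
  R.Inst Y f ∧ ∀ c ∈ R.cons, (c.scope : Set V) ⊆ Y → f ∈ c.allowed

/-- `R` is `k`-consistent: every consistent instantiation of any `k - 1` distinct
variables extends consistently to any further variable. -/
def KConsistent (R : Network V α) (k : ℕ) : Prop :=
  ∀ (Y : Finset V) (f : V → α), Y.card + 1 = k → R.ConsistentOn ↑Y f →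
    ∀ x ∉ Y, ∃ u ∈ R.dom x,
      R.ConsistentOn ↑(insert x Y) (Function.update f x u)

/-- `R` is strongly `k`-consistent: `j`-consistent for every `j ≤ k`. -/
def StronglyKConsistent (R : Network V α) (k : ℕ) : Prop :=
  ∀ j ≤ k, R.KConsistent j

/-- `R` is globally consistent: strongly `n`-consistent, `n` the number of variables. -/
def GloballyConsistent (R : Network V α) : Prop :=
  R.StronglyKConsistent (Fintype.card V)

/-- The extension set of an instantiation `f` (of `c.scope − {x}`) to `x` with
respect to the constraint `c`: the values `b` of the domain of `x` such that the
extended instantiation satisfies `c`. -/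
def extSet (R : Network V α) (c : Constraint V α) (x : V) (f : V → α) : Set α :=
  {b | b ∈ R.dom x ∧ Function.update f x b ∈ c.allowed}

/-- `c` is a relevant constraint on `x` with respect to `Y`: its scope contains `x`
and its other variables all belong to `Y`. -/
def Relevant (R : Network V α) (c : Constraint V α) (x : V) (Y : Set V) : Prop :=
  c ∈ R.cons ∧ x ∈ c.scope ∧ (↑(c.scope.erase x) : Set V) ⊆ Y

/-- `c` is properly `m`-tight with respect to `x`: every extension set to `x` has at
most `m` elements. -/
def ProperlyTightWrt (R : Network V α) (c : Constraint V α) (x : V) (m : ℕ) : Prop :=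
  ∀ f : V → α, R.Inst ↑(c.scope.erase x) f → (R.extSet c x f).ncard ≤ m

/-- `c` is properly `m`-tight: properly `m`-tight with respect to each of its
variables. -/
def ProperlyTight (R : Network V α) (c : Constraint V α) (m : ℕ) : Prop :=
  ∀ x ∈ c.scope, R.ProperlyTightWrt c x m

/-- `R` (with `n` variables) is weakly `m`-tight at level `k`: for every set `Y` of
`l` variables, `k ≤ l < n`, and every variable `x ∉ Y`, some relevant constraint on
`x` with respect to `Y` is properly `m`-tight. -/
def WeaklyTight (R : Network V α) (m k : ℕ) : Prop :=
  ∀ Y : Finset V, k ≤ Y.card → Y.card < Fintype.card V →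
    ∀ x ∉ Y, ∃ c, R.Relevant c x ↑Y ∧ R.ProperlyTight c m

/-- `R` is tree convex: there is a tree on the union of all the domains under which
every nonempty extension set of every constraint is tree convex (induces a connected
subgraph). -/
def TreeConvexNet (R : Network V α) : Prop :=
  ∃ T : SimpleGraph {a : α // a ∈ ⋃ v, (R.dom v : Set α)},
    T.IsTree ∧
      ∀ c ∈ R.cons, ∀ x ∈ c.scope, ∀ f : V → α,
        R.Inst ↑(c.scope.erase x) f → (R.extSet c x f).Nonempty →
          (T.induce (Subtype.val ⁻¹' R.extSet c x f)).Connected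

/-- `R` is relationally `m`-consistent: for any `m` distinct constraints, any common
variable `x` of their scopes, and any consistent instantiation of the union of their
scopes minus `x`, some value of the domain of `x` extends it to satisfy all `m`
constraints. -/
def RelConsistent (R : Network V α) (m : ℕ) : Prop :=
  ∀ cs : Fin m → Constraint V α, Function.Injective cs →
    (∀ i, cs i ∈ R.cons) → ∀ x : V, (∀ i, x ∈ (cs i).scope) →
      ∀ f : V → α, R.ConsistentOn ((⋃ i, ((cs i).scope : Set V)) \ {x}) f →
        ∃ u ∈ R.dom x, ∀ i, Function.update f x u ∈ (cs i).allowed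

/-- `R` is strongly relationally `m`-consistent. -/
def StronglyRelConsistent (R : Network V α) (m : ℕ) : Prop :=
  ∀ j ≤ m, R.RelConsistent j

end Network

/-!
Let `K = (m+1)(r-1)+1`, let `f` be a consistent instantiation of a set `Y` with `|Y| ≥ K`,
and let `x ∉ Y`. Weak tightness gives a relevant constraint `c` whose extension set `E` at `f`
has at most `m` values. If no value of `x` extended `f` consistently, each `b ∈ E` would
violate some relevant constraint `c_b`. The scopes of `c` and the `c_b`, without `x`, cover at
most `(m+1)(r-1) < K` variables, so `K`-consistency extends `f` restricted to them by some `u`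
satisfying `c` and every `c_b`; then `u ∈ E`, and `u` satisfies `c_u`, a contradiction.
-/

namespace Constraint

variable {V α : Type} [DecidableEq V]

theorem update_mem_allowed_iff {c : Constraint V α} {x : V} (hx : x ∉ c.scope)
    (f : V → α) (b : α) : Function.update f x b ∈ c.allowed ↔ f ∈ c.allowed := by
  have hagree : ∀ v ∈ c.scope, Function.update f x b v = f v := fun v hv =>
    Function.update_of_ne (ne_of_mem_of_not_mem hv hx) _ _
  exact ⟨c.allowed_ext _ _ hagree, c.allowed_ext _ _ fun v hv => (hagree v hv).symm⟩

theorem card_biUnion_scope_erase_le {S : Finset (Constraint V α)} {x : V} {r : ℕ}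
    (hx : ∀ c ∈ S, x ∈ c.scope) (hr : ∀ c ∈ S, c.scope.card ≤ r) :
    (S.biUnion fun c => c.scope.erase x).card ≤ S.card * (r - 1) :=
  Finset.card_biUnion_le_card_mul _ _ _ fun c hc => by
    rw [Finset.card_erase_of_mem (hx c hc)]
    exact Nat.sub_le_sub_right (hr c hc) 1

end Constraint

namespace Network

variable {V α : Type} [Fintype V] [DecidableEq V]

theorem ConsistentOn.mono {R : Network V α} {Y Z : Set V} {f : V → α}
    (hf : R.ConsistentOn Y f) (hZY : Z ⊆ Y) : R.ConsistentOn Z f :=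
  ⟨fun v hv => hf.1 v (hZY hv), fun c hc hsub => hf.2 c hc (hsub.trans hZY)⟩

theorem consistentOn_insert_update {R : Network V α} {Y : Set V} {f : V → α} {x : V} {b : α}
    (hf : R.ConsistentOn Y f) (hx : x ∉ Y) (hb : b ∈ R.dom x)
    (hrel : ∀ c, R.Relevant c x Y → Function.update f x b ∈ c.allowed) :
    R.ConsistentOn (insert x Y) (Function.update f x b) := by
  refine ⟨?_, fun c hc hsub => ?_⟩
  · rintro v (rfl | hv)
    · simpa using hb
    · rw [Function.update_of_ne (ne_of_mem_of_not_mem hv hx)]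
      exact hf.1 v hv
  by_cases hxc : x ∈ c.scope
  · refine hrel c ⟨hc, hxc, fun v hv => ?_⟩
    obtain ⟨hvx, hv⟩ := Finset.mem_erase.mp hv
    exact (hsub hv).resolve_left hvx
  · rw [Constraint.update_mem_allowed_iff hxc]
    exact hf.2 c hc fun v hv => (hsub hv).resolve_left (ne_of_mem_of_not_mem hv hxc)

theorem exists_update_mem_allowed_of_stronglyKConsistent {R : Network V α} {k : ℕ}
    (hsc : R.StronglyKConsistent k) {Y : Finset V} {f : V → α} (hf : R.ConsistentOn ↑Y f)
    {x : V} (hx : x ∉ Y) {S : Finset (Constraint V α)} (hS : ∀ c ∈ S, R.Relevant c x ↑Y)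
    (hcard : (S.biUnion fun c => c.scope.erase x).card < k) :
    ∃ u ∈ R.dom x, ∀ c ∈ S, Function.update f x u ∈ c.allowed := by
  set Z := S.biUnion fun c => c.scope.erase x
  have hZY : Z ⊆ Y := Finset.biUnion_subset.mpr fun c hc v hv => by
    exact_mod_cast (hS c hc).2.2 (Finset.mem_coe.mpr hv)
  obtain ⟨u, hu, hZx⟩ := hsc (Z.card + 1) hcard Z f rfl
    (hf.mono (Finset.coe_subset.mpr hZY)) x fun hxZ => hx (hZY hxZ)
  refine ⟨u, hu, fun c hc => hZx.2 c (hS c hc).1 ?_⟩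
  exact Finset.coe_subset.mpr <| (Finset.insert_erase_subset x c.scope).trans <|
    Finset.insert_subset_insert x (Finset.subset_biUnion_of_mem (fun c => c.scope.erase x) hc)

theorem exists_consistentOn_insert_of_properlyTightWrt {R : Network V α} {r m k : ℕ}
    (harity : ∀ c ∈ R.cons, c.scope.card ≤ r) (hsc : R.StronglyKConsistent k)
    (hk : (m + 1) * (r - 1) < k)
    {Y : Finset V} {f : V → α} (hf : R.ConsistentOn ↑Y f) {x : V} (hx : x ∉ Y)
    {c : Constraint V α} (hc : R.Relevant c x ↑Y) (htight : R.ProperlyTightWrt c x m) :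
    ∃ u ∈ R.dom x, R.ConsistentOn ↑(insert x Y) (Function.update f x u) := by
  classical
  by_contra! hno
  have hviolated : ∀ b ∈ R.dom x,
      ∃ c', R.Relevant c' x ↑Y ∧ Function.update f x b ∉ c'.allowed := fun b hb => by
    by_contra! hall
    exact hno b hb (by
      simpa only [Finset.coe_insert] using
        consistentOn_insert_update hf (by exact_mod_cast hx) hb hall)
  have : Nonempty (Constraint V α) := ⟨c⟩
  choose! g hg_rel hg_viol using hviolated
  set E := (R.dom x).filter fun b => Function.update f x b ∈ c.allowed
  have hE : E.card ≤ m := by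
    have hEq : R.extSet c x f = ↑E := by ext b; simp [extSet, E]
    simpa [hEq] using htight f fun v hv => hf.1 v (hc.2.2 hv)
  set S := insert c (E.image g)
  have hS : ∀ c' ∈ S, R.Relevant c' x ↑Y := by
    simp only [S, Finset.mem_insert, Finset.mem_image]
    rintro c' (rfl | ⟨b, hb, rfl⟩)
    exacts [hc, hg_rel b (Finset.mem_filter.mp hb).1]
  have hScard : S.card ≤ m + 1 :=
    (Finset.card_insert_le _ _).trans (Nat.succ_le_succ (Finset.card_image_le.trans hE))
  have hcard : (S.biUnion fun c' => c'.scope.erase x).card < k :=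
    lt_of_le_of_lt ((Constraint.card_biUnion_scope_erase_le (fun c' hc' => (hS c' hc').2.1)
      fun c' hc' => harity c' (hS c' hc').1).trans (Nat.mul_le_mul_right _ hScard)) hk
  obtain ⟨u, hu, hsat⟩ := exists_update_mem_allowed_of_stronglyKConsistent hsc hf hx hS hcard
  have huE : u ∈ E := Finset.mem_filter.mpr ⟨hu, hsat c (Finset.mem_insert_self _ _)⟩
  exact hg_viol u hu (hsat (g u) (Finset.mem_insert_of_mem (Finset.mem_image_of_mem g huE)))

end Network

/-- **Weak Tightness.**  A constraint network with constraints of arity at most `r`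
that is strongly `((m+1)(r−1)+1)`-consistent and weakly `m`-tight at level
`(m+1)(r−1)+1` is globally consistent. -/
theorem Network.weaklyTight_globallyConsistent
    {V α : Type} [Fintype V] [DecidableEq V] (R : Network V α) (r m : ℕ)
    (harity : ∀ c ∈ R.cons, c.scope.card ≤ r)
    (hsc : R.StronglyKConsistent ((m + 1) * (r - 1) + 1))
    (hwt : R.WeaklyTight m ((m + 1) * (r - 1) + 1)) :
    R.GloballyConsistent := by
  intro j hj
  by_cases hjK : j ≤ (m + 1) * (r - 1) + 1
  · exact hsc j hjK
  intro Y f hcard hf x hx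
  obtain ⟨c, hc, htight⟩ :=
    hwt Y (by omega) (Finset.card_lt_univ_of_notMem hx) x hx
  exact exists_consistentOn_insert_of_properlyTightWrt harity hsc (Nat.lt_succ_self _) hf hx hc
    (htight x hc.2.1)
end
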